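/- Define f_n(x) by the generating function ∑_n f_n(x)z^n = (1−iz)^(−3/4+ix)(1+iz)^(−3/4−ix). For every integer n ≥ 0 and every complex s with 0 < Re(s) < 3/2, ∫_0^∞ (x+1)^(−3/2) · ((x−1)/(x+1))^n · x^(s−1) dx = i^n · (2·n!/(√π·(3/2)_n)) · Γ(s)·Γ(3/2 − s) · f_n((s − 3/4)/i), where (3/2)_n is the Pochhammer symbol. -/

import Mathlib

open Real MeasureTheory

/-- The generalized binomial coefficient `C(z,k) = z(z−1)⋯(z−k+1)/k!`. -/
noncomputable def genBinom (z : ℂ) (k : ℕ) : ℂ :=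
  (∏ j ∈ Finset.range k, (z - j)) / (Nat.factorial k)

/-- The symmetric Meixner–Pollaczek polynomial
`f_n(x) = iⁿ ∑_{k=0}^n (−1)^k C(−3/4+ix, k) C(−3/4−ix, n−k)`. -/
noncomputable def fMP (n : ℕ) (x : ℂ) : ℂ :=
  Complex.I ^ n * ∑ k ∈ Finset.range (n + 1),
    (-1) ^ k * genBinom (-(3/4) + Complex.I * x) k *
      genBinom (-(3/4) - Complex.I * x) (n - k)

section Aux
open Set
lemma gamma_shift (z : ℂ) (hz : 0 < z.re) (k : ℕ) :
    Complex.Gamma (z + k) = (∏ j ∈ Finset.range k, (z + j)) * Complex.Gamma z := by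
  induction k with
  | zero => simp
  | succ k ih =>
    have hne : z + (k : ℂ) ≠ 0 := by
      intro h
      have : (z + (k : ℂ)).re = 0 := by rw [h]; simp
      simp only [Complex.add_re, Complex.natCast_re] at this
      have : (0:ℝ) ≤ (k:ℝ) := Nat.cast_nonneg k
      linarith [hz]
    have : (z + ((k+1 : ℕ) : ℂ)) = (z + k) + 1 := by push_cast; ring
    rw [this, Complex.Gamma_add_one _ hne, ih, Finset.prod_range_succ]
    ring

lemma betaIoi {a b : ℂ} (ha : 0 < a.re) (hb : 0 < b.re) :
    IntegrableOn (fun x : ℝ => (x:ℂ) ^ (a-1) * ((1:ℂ)+x) ^ (-(a+b))) (Ioi 0) ∧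
    ∫ x in Ioi (0:ℝ), (x:ℂ) ^ (a-1) * ((1:ℂ)+x) ^ (-(a+b))
      = Complex.Gamma a * Complex.Gamma b / Complex.Gamma (a+b) := by
  set g : ℝ → ℂ := fun t => (t:ℂ) ^ (a-1) * (1 - (t:ℂ)) ^ (b-1) with hg
  set f : ℝ → ℝ := fun x => x / (1+x) with hf
  set f' : ℝ → ℝ := fun x => ((1+x)^2)⁻¹ with hf'def
  have hderiv : ∀ x ∈ Ioi (0:ℝ), HasDerivWithinAt f (f' x) (Ioi 0) x := by
    intro x hx
    have hx0 : (0:ℝ) < x := hx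
    have h1x : (1:ℝ) + x ≠ 0 := by positivity
    have := (hasDerivAt_id x).div ((hasDerivAt_id x).const_add 1) h1x
    simp only [one_mul, mul_one, id] at this
    have heq : (1 + x - x) / (1+x)^2 = f' x := by
      rw [hf'def]; field_simp; ring
    rw [heq] at this
    exact this.hasDerivWithinAt
  have hinj : InjOn f (Ioi 0) := by
    intro x hx y hy hxy
    have hx0 : (0:ℝ) < x := hx
    have hy0 : (0:ℝ) < y := hy
    have h1x : (1:ℝ) + x ≠ 0 := by positivity
    have h1y : (1:ℝ) + y ≠ 0 := by positivity
    have : x * (1+y) = y * (1+x) := by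
      simp only [hf] at hxy; rw [div_eq_div_iff h1x h1y] at hxy; linarith [hxy]
    nlinarith
  have himg : f '' (Ioi 0) = Ioo (0:ℝ) 1 := by
    ext t
    constructor
    · rintro ⟨x, hx, rfl⟩
      have hx0 : (0:ℝ) < x := hx
      constructor
      · positivity
      · rw [div_lt_one (by positivity)]; linarith
    · intro ht
      refine ⟨t / (1-t), ?_, ?_⟩
      · have : (0:ℝ) < t / (1-t) := div_pos ht.1 (by linarith [ht.2])
        exact this
      · have h1t : (1:ℝ) - t ≠ 0 := by linarith [ht.2]
        rw [hf]
        field_simp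
        ring
  have key := MeasureTheory.integral_image_eq_integral_abs_deriv_smul measurableSet_Ioi hderiv hinj g
  have keyInt := MeasureTheory.integrableOn_image_iff_integrableOn_abs_deriv_smul measurableSet_Ioi hderiv hinj g
  rw [himg] at key keyInt
  -- pointwise identity on Ioi 0
  have hpt : ∀ x ∈ Ioi (0:ℝ), |f' x| • g (f x)
      = (x:ℂ) ^ (a-1) * ((1:ℂ)+x) ^ (-(a+b)) := by
    intro x hx
    have hx0 : (0:ℝ) < x := hx
    have h1x : (0:ℝ) < 1 + x := by positivity
    have h1xc : ((1:ℂ) + x) ≠ 0 := by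
      have : (((1 + x : ℝ)) : ℂ) ≠ 0 := Complex.ofReal_ne_zero.mpr h1x.ne'
      push_cast at this; exact this
    have harg : ((1:ℂ)+x).arg ≠ π := by
      have : ((1:ℂ)+x) = ((1+x : ℝ) : ℂ) := by push_cast; ring
      rw [this, Complex.arg_ofReal_of_nonneg h1x.le]
      exact (by positivity : (0:ℝ) < π).ne
    have hsub : (1 : ℂ) - ((f x : ℝ) : ℂ) = ((1:ℂ)+x)⁻¹ := by
      have : (1:ℝ) - f x = (1+x)⁻¹ := by rw [hf]; field_simp; ring
      rw [show ((f x : ℝ):ℂ) = ((f x : ℝ):ℂ) from rfl, ← Complex.ofReal_one, ← Complex.ofReal_sub, this]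
      push_cast; ring_nf
    have hfx : ((f x : ℝ) : ℂ) = (x:ℂ) * ((1:ℂ)+x)⁻¹ := by
      rw [hf]; push_cast; field_simp
    have habs : |f' x| = ((1+x)^2)⁻¹ := by
      rw [hf'def, abs_of_pos (by positivity)]
    rw [hg]
    simp only [habs, Complex.real_smul]
    rw [hsub, hfx]
    have hio : ((1:ℂ)+x)⁻¹ = (((1+x)⁻¹ : ℝ) : ℂ) := by push_cast; ring
    have hmul : ((x:ℂ) * ((1:ℂ)+x)⁻¹) ^ (a-1) = (x:ℂ)^(a-1) * (((1:ℂ)+x)⁻¹)^(a-1) := by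
      rw [hio]
      exact Complex.mul_cpow_ofReal_nonneg hx0.le (by positivity) _
    have hinvpow : ∀ c : ℂ, (((1:ℂ)+x)⁻¹) ^ c = ((1:ℂ)+x) ^ (-c) := by
      intro c
      rw [Complex.inv_cpow _ _ harg, ← Complex.cpow_neg]
    have hcast : ((((1 + x)^2)⁻¹ : ℝ) : ℂ) = ((1:ℂ)+x) ^ (-(2:ℂ)) := by
      rw [show (-(2:ℂ)) = -((2:ℕ):ℂ) by norm_num, Complex.cpow_neg, Complex.cpow_natCast,
        Complex.ofReal_inv, Complex.ofReal_pow, Complex.ofReal_add, Complex.ofReal_one]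
    rw [hmul, hinvpow, hinvpow, hcast,
      show (-(a+b)) = (-(a-1)) + ((-(b-1)) + (-2:ℂ)) by ring,
      Complex.cpow_add _ _ h1xc, Complex.cpow_add _ _ h1xc]
    ring
  -- conclude
  have hInt : IntegrableOn (fun x : ℝ => (x:ℂ) ^ (a-1) * ((1:ℂ)+x) ^ (-(a+b))) (Ioi 0) := by
    have hg_int : IntegrableOn g (Ioo (0:ℝ) 1) := by
      have := Complex.betaIntegral_convergent ha hb
      rw [intervalIntegrable_iff_integrableOn_Ioc_of_le zero_le_one] at this
      exact this.mono_set Ioo_subset_Ioc_self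
    exact ((keyInt.mp hg_int).congr_fun hpt measurableSet_Ioi)
  refine ⟨hInt, ?_⟩
  have h1 : ∫ x in Ioi (0:ℝ), (x:ℂ) ^ (a-1) * ((1:ℂ)+x) ^ (-(a+b))
      = ∫ x in Ioo (0:ℝ) 1, g x := by
    rw [key]
    exact (setIntegral_congr_fun measurableSet_Ioi hpt).symm
  have h2 : ∫ x in Ioo (0:ℝ) 1, g x = Complex.betaIntegral a b := by
    rw [Complex.betaIntegral, intervalIntegral.integral_of_le zero_le_one,
      MeasureTheory.integral_Ioc_eq_integral_Ioo]
  rw [h1, h2]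
  have h3 := Complex.Gamma_mul_Gamma_eq_betaIntegral ha hb
  have h4 : Complex.Gamma (a+b) ≠ 0 := Complex.Gamma_ne_zero_of_re_pos (by
    rw [Complex.add_re]; linarith)
  field_simp [h3]
  rw [h3]; ring

lemma integrand_expand (n : ℕ) (s : ℂ) (x : ℝ) (hx : x ∈ Ioi (0:ℝ)) :
    ((x:ℂ) + 1) ^ (-(3/2 : ℂ)) * (((x:ℂ) - 1) / ((x:ℂ) + 1)) ^ n * (x:ℂ) ^ (s - 1)
    = ∑ k ∈ Finset.range (n+1), ((-1:ℂ)^(k+n) * (n.choose k)) *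
        ((x:ℂ) ^ ((s+k)-1) * ((1:ℂ)+x) ^ (-((s+k) + ((n:ℂ)+3/2-s-k)))) := by
  have hx0 : (0:ℝ) < x := hx
  have hxc : (x:ℂ) ≠ 0 := by
    exact_mod_cast Complex.ofReal_ne_zero.mpr hx0.ne'
  have hx1 : (x:ℂ) + 1 ≠ 0 := by
    have : (((x + 1 : ℝ)) : ℂ) ≠ 0 := Complex.ofReal_ne_zero.mpr (by positivity)
    push_cast at this; exact this
  rw [div_pow, sub_pow]
  simp only [one_pow, mul_one]
  rw [Finset.sum_div, Finset.mul_sum, Finset.sum_mul]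
  refine Finset.sum_congr rfl fun k hk => ?_
  have hck : (x:ℂ)^((s+(k:ℂ))-1) = (x:ℂ)^k * (x:ℂ)^(s-1) := by
    rw [← Complex.cpow_natCast (x:ℂ) k, ← Complex.cpow_add _ _ hxc]
    congr 1; ring
  have hck2 : ((1:ℂ)+x) ^ (-((s+(k:ℂ)) + ((n:ℂ)+3/2-s-(k:ℂ))))
      = ((x:ℂ)+1) ^ (-(3/2:ℂ)) / ((x:ℂ)+1)^n := by
    rw [show ((1:ℂ)+(x:ℂ)) = ((x:ℂ)+1) by ring, ← Complex.cpow_natCast ((x:ℂ)+1) n,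
      ← Complex.cpow_sub _ _ hx1]
    congr 1; ring
  rw [hck, hck2]
  ring

lemma re32 : ((3:ℂ)/2).re = 3/2 := by
  norm_num [Complex.div_re]

lemma gamma_32 : Complex.Gamma (3/2) = (Real.sqrt π : ℂ) / 2 := by
  have h : Complex.Gamma ((1:ℂ)/2 + 1) = (1/2 : ℂ) * Complex.Gamma (1/2) :=
    Complex.Gamma_add_one _ (by norm_num)
  rw [show (3/2:ℂ) = (1:ℂ)/2 + 1 by norm_num, h, Complex.Gamma_one_half_eq]
  rw [show ((π : ℂ) ^ (1/2 : ℂ)) = ((Real.sqrt π : ℝ) : ℂ) by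
    rw [Real.sqrt_eq_rpow, Complex.ofReal_cpow pi_pos.le]; norm_num]
  ring

lemma alg (n : ℕ) (s : ℂ) (hs : 0 < s.re) (hs2 : s.re < 3/2) :
    ∑ k ∈ Finset.range (n+1), ((-1:ℂ)^(k+n) * (n.choose k)) *
      (Complex.Gamma (s+k) * Complex.Gamma ((n:ℂ)+3/2-s-k)
        / Complex.Gamma ((3/2:ℂ) + n))
    = Complex.I ^ n *
        (2 * (Nat.factorial n) / ((Real.sqrt π : ℂ) * ∏ j ∈ Finset.range n, ((3:ℂ)/2 + j))) *
        Complex.Gamma s * Complex.Gamma (3/2 - s) * fMP n ((s - 3/4) / Complex.I) := by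
  have hts : (0:ℝ) < ((3:ℂ)/2 - s).re := by
    rw [Complex.sub_re, re32]; linarith
  -- simplify fMP argument
  have hIx : Complex.I * ((s - 3/4) / Complex.I) = s - 3/4 :=
    mul_div_cancel₀ _ Complex.I_ne_zero
  rw [fMP]
  rw [hIx, show -(3/4:ℂ) + (s - 3/4) = s - 3/2 by ring,
    show -(3/4:ℂ) - (s - 3/4) = -s by ring]
  set P : ℕ → ℂ := fun m => ∏ j ∈ Finset.range m, (s + j) with hP
  set Q : ℕ → ℂ := fun m => ∏ j ∈ Finset.range m, ((3:ℂ)/2 - s + j) with hQ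
  set R : ℂ := ∏ j ∈ Finset.range n, ((3:ℂ)/2 + j) with hR
  have hsq : ∀ m : ℕ, ((-1:ℂ))^m * (-1)^m = 1 := fun m => by
    rw [← pow_add]; exact Even.neg_one_pow ⟨m, rfl⟩
  have hgenA : ∀ m, genBinom (s - 3/2) m = (-1:ℂ)^m * Q m / (m.factorial) := by
    intro m
    rw [genBinom]
    congr 1
    calc ∏ j ∈ Finset.range m, (s - 3/2 - (j:ℂ))
        = ∏ j ∈ Finset.range m, ((-1) * ((3:ℂ)/2 - s + j)) :=
          Finset.prod_congr rfl fun j _ => by ring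
      _ = (-1:ℂ)^m * Q m := by rw [Finset.prod_mul_distrib, Finset.prod_const, Finset.card_range]
  have hgenB : ∀ m, genBinom (-s) m = (-1:ℂ)^m * P m / (m.factorial) := by
    intro m
    rw [genBinom]
    congr 1
    calc ∏ j ∈ Finset.range m, (-s - (j:ℂ))
        = ∏ j ∈ Finset.range m, ((-1) * (s + j)) :=
          Finset.prod_congr rfl fun j _ => by ring
      _ = (-1:ℂ)^m * P m := by rw [Finset.prod_mul_distrib, Finset.prod_const, Finset.card_range]
  have hgenA' : ∀ m, (-1:ℂ)^m * genBinom (s - 3/2) m = Q m / (m.factorial) := by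
    intro m
    rw [hgenA m, mul_div_assoc', ← mul_assoc, hsq m, one_mul]
  have hGamT : ∀ k, k ≤ n → Complex.Gamma ((n:ℂ)+3/2-s-k)
      = Q (n-k) * Complex.Gamma ((3:ℂ)/2 - s) := by
    intro k hk
    have h1 : ((n:ℂ)+3/2-s-k) = ((3:ℂ)/2 - s) + ((n - k : ℕ):ℂ) := by
      push_cast [Nat.cast_sub hk]; ring
    rw [h1, gamma_shift _ hts]
  have hGamN : Complex.Gamma ((3/2:ℂ) + n) = R * ((Real.sqrt π : ℂ)/2) := by
    rw [gamma_shift _ (by rw [re32]; norm_num) n, gamma_32]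
  have hI : Complex.I^n * Complex.I^n = (-1:ℂ)^n := by
    rw [← mul_pow, Complex.I_mul_I]
  have key : ∀ (c g1 g2 S : ℂ), Complex.I^n * c * g1 * g2 * (Complex.I^n * S)
      = (-1:ℂ)^n * (c * (g1 * (g2 * S))) := by
    intro c g1 g2 S; rw [← hI]; ring
  rw [key, ← Finset.sum_range_reflect
    (fun k => (-1:ℂ)^k * genBinom (s - 3/2) k * genBinom (-s) (n - k)) (n+1)]
  simp only [Nat.add_sub_cancel, Finset.mul_sum]
  refine Finset.sum_congr rfl fun k hk => ?_
  have hk' : k ≤ n := Finset.mem_range_succ_iff.mp hk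
  rw [Nat.sub_sub_self hk', gamma_shift s hs k, hGamT k hk', hGamN, hgenA', hgenB]
  have hchoose : (n.choose k : ℂ) = (n.factorial : ℂ) / ((k.factorial : ℂ) * ((n-k).factorial : ℂ)) := by
    rw [Nat.cast_choose ℂ hk']
  have hfk : ((k.factorial : ℂ)) ≠ 0 := Nat.cast_ne_zero.mpr k.factorial_ne_zero
  have hfnk : (((n-k).factorial : ℂ)) ≠ 0 := Nat.cast_ne_zero.mpr (n-k).factorial_ne_zero
  have hsp : (Real.sqrt π : ℂ) ≠ 0 := by
    exact_mod_cast Complex.ofReal_ne_zero.mpr (Real.sqrt_ne_zero'.mpr pi_pos)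
  have hRne : R ≠ 0 := by
    rw [hR]
    refine Finset.prod_ne_zero_iff.mpr fun j _ => ?_
    intro h
    have := congrArg Complex.re h
    rw [Complex.add_re, re32, Complex.natCast_re, Complex.zero_re] at this
    have : (0:ℝ) ≤ (j:ℝ) := Nat.cast_nonneg j
    linarith
  rw [hchoose, pow_add]
  field_simp
  ring



end Aux

open Set in
/-- Mellin transform representation of `f_n`: for `0 < Re s < 3/2`,
`∫_0^∞ (x+1)^{−3/2} ((x−1)/(x+1))ⁿ x^{s−1} dx
  = iⁿ (2n!/(√π (3/2)_n)) Γ(s) Γ(3/2−s) f_n((s−3/4)/i)`. -/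
theorem stmt18 (n : ℕ) (s : ℂ) (hs : 0 < s.re) (hs2 : s.re < 3/2) :
    ∫ x in Set.Ioi (0:ℝ),
        ((x : ℂ) + 1) ^ (-(3/2 : ℂ)) * (((x : ℂ) - 1) / ((x : ℂ) + 1)) ^ n *
          (x : ℂ) ^ (s - 1)
    = Complex.I ^ n *
        (2 * (Nat.factorial n) / ((Real.sqrt π : ℂ) * ∏ j ∈ Finset.range n, ((3:ℂ)/2 + j))) *
        Complex.Gamma s * Complex.Gamma (3/2 - s) * fMP n ((s - 3/4) / Complex.I) := by
  have hak : ∀ k : ℕ, 0 < (s + (k:ℂ)).re := by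
    intro k
    rw [Complex.add_re, Complex.natCast_re]
    have : (0:ℝ) ≤ (k:ℝ) := Nat.cast_nonneg k
    linarith
  have hbk : ∀ k : ℕ, k ≤ n → 0 < ((n:ℂ)+3/2-s-(k:ℂ)).re := by
    intro k hk
    have h1 : ((n:ℂ)+3/2-s-(k:ℂ)).re = (n:ℝ) + 3/2 - s.re - (k:ℝ) := by
      simp [Complex.sub_re, Complex.add_re, Complex.natCast_re, re32]
    have h2 : (k:ℝ) ≤ (n:ℝ) := Nat.cast_le.mpr hk
    rw [h1]; linarith
  rw [MeasureTheory.setIntegral_congr_fun measurableSet_Ioi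
    (fun x hx => integrand_expand n s x hx)]
  rw [MeasureTheory.integral_finset_sum _ (fun k hk =>
    ((betaIoi (hak k) (hbk k (Finset.mem_range_succ_iff.mp hk))).1.const_mul _))]
  have hstep : ∀ k ∈ Finset.range (n+1),
      (∫ x in Ioi (0:ℝ), ((-1:ℂ)^(k+n) * (n.choose k)) *
        ((x:ℂ) ^ ((s+k)-1) * ((1:ℂ)+x) ^ (-((s+k) + ((n:ℂ)+3/2-s-k)))))
      = ((-1:ℂ)^(k+n) * (n.choose k)) *
        (Complex.Gamma (s+k) * Complex.Gamma ((n:ℂ)+3/2-s-k)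
          / Complex.Gamma ((3/2:ℂ) + n)) := by
    intro k hk
    have hk' : k ≤ n := Finset.mem_range_succ_iff.mp hk
    rw [MeasureTheory.integral_const_mul, (betaIoi (hak k) (hbk k hk')).2,
      show (s+(k:ℂ)) + ((n:ℂ)+3/2-s-(k:ℂ)) = (3/2:ℂ) + (n:ℂ) by ring]
  rw [Finset.sum_congr rfl hstep]
  exact alg n s hs hs2
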